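/- Let M be a model with world set W and let R⁰ ⊆ (𝒯∖ℱ)×W. Define the sequence R^{i+1} := R^i ∪ {(φ,w) : φ ∈ ℱ, D(φ) = i+1, M(R^i),w ⊨ φ} and R^ω := ⋃_{i<ω} R^i. Then R⁰ ≡₀ R^ω and, for every formula φ ∈ ℱ and world w ∈ W, (φ,w) ∈ R^ω if and only if M(R^ω),w ⊨ φ. -/
import Mathlib


mutual
inductive SigTerm (Ag Pr : Type) (Op : ℕ → Type) : Type where
  | agent : Ag → SigTerm Ag Pr Op
  | op : (n : ℕ) → Op n → (Fin n → SigTerm Ag Pr Op) → SigTerm Ag Pr Op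
  | ofFormula : SigFormula Ag Pr Op → SigTerm Ag Pr Op

inductive SigFormula (Ag Pr : Type) (Op : ℕ → Type) : Type where
  | atom : Pr → SigFormula Ag Pr Op
  | neg : SigFormula Ag Pr Op → SigFormula Ag Pr Op
  | and : SigFormula Ag Pr Op → SigFormula Ag Pr Op → SigFormula Ag Pr Op
  | entails : SigTerm Ag Pr Op → SigFormula Ag Pr Op → SigFormula Ag Pr Op
  | signs : Ag → SigTerm Ag Pr Op → SigFormula Ag Pr Op
  | says : Ag → SigFormula Ag Pr Op → SigFormula Ag Pr Op
end

namespace SigFormula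
variable {Ag Pr : Type} {Op : ℕ → Type}
/-- `φ → ψ` abbreviates `¬(φ ∧ ¬ψ)`. -/
def imp (φ ψ : SigFormula Ag Pr Op) : SigFormula Ag Pr Op := .neg (.and φ (.neg ψ))
end SigFormula

structure SigModel (Ag Pr : Type) (Op : ℕ → Type) (W : Type) where
  Rsig : W → Ag → SigTerm Ag Pr Op → Prop
  Rent : SigTerm Ag Pr Op → W → Prop
  Rsays : W → Ag → W → Prop
  val : W → Pr → Prop

variable {Ag Pr : Type} {Op : ℕ → Type} {W : Type}

def Sat (M : SigModel Ag Pr Op W) : W → SigFormula Ag Pr Op → Prop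
  | w, .atom p => M.val w p
  | w, .neg φ => ¬ Sat M w φ
  | w, .and φ ψ => Sat M w φ ∧ Sat M w ψ
  | w, .entails t φ => ∀ w' : W, M.Rent t w' → Sat M w' φ
  | w, .signs A t => M.Rsig w A t
  | w, .says A φ => ∀ w' : W, M.Rsays w A w' → Sat M w' φ

def Valid (M : SigModel Ag Pr Op W) (φ : SigFormula Ag Pr Op) : Prop :=
  ∀ w : W, Sat M w φ

/-- SC1: for every formula `φ` and world `w`, `(φ,w) ∈ R_⊳` implies `M,w ⊨ φ`. -/
def SC1 (M : SigModel Ag Pr Op W) : Prop :=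
  ∀ (φ : SigFormula Ag Pr Op) (w : W), M.Rent (.ofFormula φ) w → Sat M w φ

/-- SC2: `(w,A,t) ∈ R_sig` and `(w,A,w') ∈ R_says` imply `(t,w') ∈ R_⊳`. -/
def SC2 (M : SigModel Ag Pr Op W) : Prop :=
  ∀ (w : W) (A : Ag) (t : SigTerm Ag Pr Op) (w' : W),
    M.Rsig w A t → M.Rsays w A w' → M.Rent t w'

/-- SC3: `(w,B,t) ∈ R_sig` and `(w,A,w') ∈ R_says` imply `(w',B,t) ∈ R_sig`. -/
def SC3 (M : SigModel Ag Pr Op W) : Prop :=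
  ∀ (w : W) (A B : Ag) (t : SigTerm Ag Pr Op) (w' : W),
    M.Rsig w B t → M.Rsays w A w' → M.Rsig w' B t

/-- `φ` is a substitution instance of a propositional tautology: every
boolean valuation of formulas that respects `¬` and `∧` makes `φ` true. -/
def IsTaut (φ : SigFormula Ag Pr Op) : Prop :=
  ∀ v : SigFormula Ag Pr Op → Bool,
    (∀ ψ, v (.neg ψ) = !(v ψ)) →
    (∀ ψ χ, v (.and ψ χ) = (v ψ && v χ)) →
    v φ = true

/-- Derivability in the signature logic. -/
inductive Deriv {Ag Pr : Type} {Op : ℕ → Type} : SigFormula Ag Pr Op → Prop where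
  | ax1 {φ} : IsTaut φ → Deriv φ
  | ax2 (φ : SigFormula Ag Pr Op) : Deriv (.entails (.ofFormula φ) φ)
  | ax3 (t : SigTerm Ag Pr Op) (φ ψ) :
      Deriv (((SigFormula.entails t φ).and (.entails t (φ.imp ψ))).imp (.entails t ψ))
  | ax4 (A : Ag) (t : SigTerm Ag Pr Op) (φ) :
      Deriv (((SigFormula.signs A t).and (.entails t φ)).imp (.says A φ))
  | ax5 (A : Ag) (φ ψ) :
      Deriv (((SigFormula.says A φ).and (.says A (φ.imp ψ))).imp (.says A ψ))
  | ax6 (A B : Ag) (t : SigTerm Ag Pr Op) :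
      Deriv ((SigFormula.signs B t).imp (.says A (.signs B t)))
  | ax7 (A : Ag) (t : SigTerm Ag Pr Op) (φ) :
      Deriv ((SigFormula.entails t φ).imp (.says A (.entails t φ)))
  | r1 {φ ψ} : Deriv φ → Deriv (φ.imp ψ) → Deriv ψ
  | r2 (t : SigTerm Ag Pr Op) {φ} : Deriv φ → Deriv (.entails t φ)
  | r3 (A : Ag) {φ} : Deriv φ → Deriv (.says A φ)

/-- The model obtained from `M` by replacing the entailment relation by `R`. -/
def SigModel.withEnt (M : SigModel Ag Pr Op W) (R : SigTerm Ag Pr Op → W → Prop) :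
    SigModel Ag Pr Op W := { M with Rent := R }

/-- The semantic operator corresponding to `G says`, on sets of worlds. -/
def GSaysStep (M : SigModel Ag Pr Op W) (G : Finset Ag) (X : Set W) : Set W :=
  {w | ∀ A ∈ G, ∀ w' : W, M.Rsays w A w' → w' ∈ X}

/-- The set of worlds of `M` where `G says^k φ` holds (`k ≥ 1`). -/
def GSaysK (M : SigModel Ag Pr Op W) (G : Finset Ag) (φ : SigFormula Ag Pr Op) (k : ℕ) : Set W :=
  (GSaysStep M G)^[k] {w | Sat M w φ}

/-- The set of worlds of `M` where `G saysᵂ φ` holds. -/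
def GSaysOmega (M : SigModel Ag Pr Op W) (G : Finset Ag) (φ : SigFormula Ag Pr Op) : Set W :=
  {w | ∀ k ≥ 1, w ∈ GSaysK M G φ k}

mutual
/-- Entailment depth of a term. -/
def SigTerm.depth : SigTerm Ag Pr Op → ℕ
  | .agent _ => 0
  | .op _ _ _ => 0
  | .ofFormula φ => φ.depth
/-- Entailment depth of a formula. -/
def SigFormula.depth : SigFormula Ag Pr Op → ℕ
  | .atom _ => 1
  | .neg φ => φ.depth
  | .and φ ψ => max φ.depth ψ.depth
  | .entails t φ => max t.depth φ.depth + 1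
  | .signs _ _ => 1
  | .says _ φ => φ.depth
end

/-- `R ≡_k R'`: the relations agree on all terms of entailment depth at most `k`. -/
def EquivK (R R' : SigTerm Ag Pr Op → W → Prop) (k : ℕ) : Prop :=
  ∀ (t : SigTerm Ag Pr Op) (w : W), t.depth ≤ k → (R t w ↔ R' t w)

/-- The sequence `R⁰ ⊆ R¹ ⊆ ⋯` of approximations to `R^ω`. -/
def RSeq (M : SigModel Ag Pr Op W) (R0 : SigTerm Ag Pr Op → W → Prop) :
    ℕ → SigTerm Ag Pr Op → W → Prop
  | 0 => R0
  | i + 1 => fun t w => RSeq M R0 i t w ∨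
      ∃ φ : SigFormula Ag Pr Op, t = .ofFormula φ ∧ φ.depth = i + 1 ∧
        Sat (M.withEnt (RSeq M R0 i)) w φ

/-- The limit `R^ω = ⋃_i R^i`. -/
def ROmega (M : SigModel Ag Pr Op W) (R0 : SigTerm Ag Pr Op → W → Prop) :
    SigTerm Ag Pr Op → W → Prop :=
  fun t w => ∃ i, RSeq M R0 i t w

theorem sigFormula_depth_pos : ∀ φ : SigFormula Ag Pr Op, 1 ≤ φ.depth
  | .atom _ => by simp [SigFormula.depth]
  | .neg φ => by simp only [SigFormula.depth]; exact sigFormula_depth_pos φ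
  | .and φ ψ => by
      simp only [SigFormula.depth]
      exact le_trans (sigFormula_depth_pos φ) (le_max_left _ _)
  | .entails t φ => by simp only [SigFormula.depth]; omega
  | .signs _ _ => by simp [SigFormula.depth]
  | .says _ φ => by simp only [SigFormula.depth]; exact sigFormula_depth_pos φ

theorem sat_congr (M : SigModel Ag Pr Op W) :
    ∀ (φ : SigFormula Ag Pr Op) (R R' : SigTerm Ag Pr Op → W → Prop),
    (∀ t w, SigTerm.depth t < φ.depth → (R t w ↔ R' t w)) →
    ∀ w, (Sat (M.withEnt R) w φ ↔ Sat (M.withEnt R') w φ)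
  | .atom p, R, R', h, w => Iff.rfl
  | .neg φ, R, R', h, w => by
      simp only [Sat]
      exact not_congr (sat_congr M φ R R'
        (fun t v ht => h t v (by simp only [SigFormula.depth]; exact ht)) w)
  | .and φ ψ, R, R', h, w => by
      simp only [Sat]
      refine and_congr
        (sat_congr M φ R R' (fun t v ht => h t v ?_) w)
        (sat_congr M ψ R R' (fun t v ht => h t v ?_) w) <;>
      · simp only [SigFormula.depth]
        have h1 := Nat.le_max_left φ.depth ψ.depth
        have h2 := Nat.le_max_right φ.depth ψ.depth
        omega
  | .entails t φ, R, R', h, w => by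
      simp only [Sat, SigModel.withEnt]
      have hdt : SigTerm.depth t < (SigFormula.entails t φ).depth := by
        simp only [SigFormula.depth]
        have := Nat.le_max_left t.depth φ.depth; omega
      have hφ := sat_congr M φ R R' (fun u v hu => h u v (by
        simp only [SigFormula.depth]
        have := Nat.le_max_right t.depth φ.depth; omega)) 
      exact forall_congr' fun w' => imp_congr (h t w' hdt) (hφ w')
  | .signs A t, R, R', h, w => Iff.rfl
  | .says A φ, R, R', h, w => by
      simp only [Sat]
      have hφ := sat_congr M φ R R'
        (fun u v hu => h u v (by simp only [SigFormula.depth]; exact hu))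
      exact forall_congr' fun w' => imp_congr Iff.rfl (hφ w')

theorem rseq_mono (M : SigModel Ag Pr Op W) (R0 : SigTerm Ag Pr Op → W → Prop) :
    ∀ {i j : ℕ}, i ≤ j → ∀ t w, RSeq M R0 i t w → RSeq M R0 j t w := by
  intro i j
  induction j with
  | zero => intro hij t w h; rw [Nat.le_zero.mp hij] at h; exact h
  | succ j ih =>
    intro hij t w h
    rcases Nat.lt_or_ge i (j+1) with hlt | hge
    · exact Or.inl (ih (Nat.lt_succ_iff.mp hlt) t w h)
    · rw [le_antisymm hij hge] at h; exact h

theorem rseq_depth (M : SigModel Ag Pr Op W) (R0 : SigTerm Ag Pr Op → W → Prop)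
    (hR0 : ∀ (φ : SigFormula Ag Pr Op) (w : W), ¬ R0 (.ofFormula φ) w) :
    ∀ (i : ℕ) (φ : SigFormula Ag Pr Op) (w : W),
      RSeq M R0 i (.ofFormula φ) w → φ.depth ≤ i := by
  intro i
  induction i with
  | zero => intro φ w h; exact absurd h (hR0 φ w)
  | succ i ih =>
    intro φ w h
    rcases h with h | ⟨ψ, hψ, hd, _⟩
    · exact le_trans (ih φ w h) (Nat.le_succ _)
    · injection hψ with h'; subst h'; omega

theorem rseq_stable (M : SigModel Ag Pr Op W) (R0 : SigTerm Ag Pr Op → W → Prop) :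
    ∀ (j : ℕ) (t : SigTerm Ag Pr Op) (w : W), t.depth ≤ j →
      RSeq M R0 (j+1) t w → RSeq M R0 j t w := by
  intro j t w hd h
  rcases h with h | ⟨ψ, rfl, hdψ, _⟩
  · exact h
  · exfalso; simp only [SigTerm.depth] at hd; omega

theorem romega_iff (M : SigModel Ag Pr Op W) (R0 : SigTerm Ag Pr Op → W → Prop)
    (i : ℕ) (t : SigTerm Ag Pr Op) (w : W) (hd : t.depth ≤ i) :
    ROmega M R0 t w ↔ RSeq M R0 i t w := by
  have key : ∀ j, RSeq M R0 j t w → RSeq M R0 i t w := by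
    intro j
    induction j with
    | zero => intro h; exact rseq_mono M R0 (Nat.zero_le i) t w h
    | succ j ih =>
      intro h
      rcases Nat.lt_or_ge i (j+1) with hlt | hge
      · exact ih (rseq_stable M R0 j t w (le_trans hd (Nat.lt_succ_iff.mp hlt)) h)
      · exact rseq_mono M R0 hge t w h
  exact ⟨fun ⟨j, hj⟩ => key j hj, fun h => ⟨i, h⟩⟩

/-- the limit `R^ω` of the approximation sequence agrees with `R⁰` on terms of
depth `0` and satisfies the fixed-point property: `(φ,w) ∈ R^ω` iff `M(R^ω),w ⊨ φ`. -/
theorem romega_fixed_point (M : SigModel Ag Pr Op W)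
    (R0 : SigTerm Ag Pr Op → W → Prop)
    (hR0 : ∀ (φ : SigFormula Ag Pr Op) (w : W), ¬ R0 (.ofFormula φ) w) :
    EquivK R0 (ROmega M R0) 0 ∧
    (∀ (φ : SigFormula Ag Pr Op) (w : W),
      ROmega M R0 (.ofFormula φ) w ↔ Sat (M.withEnt (ROmega M R0)) w φ) := by
  constructor
  · intro t w ht
    exact (romega_iff M R0 0 t w ht).symm
  · intro φ w
    obtain ⟨k, hk⟩ : ∃ k, φ.depth = k + 1 :=
      ⟨φ.depth - 1, by have := sigFormula_depth_pos φ; omega⟩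
    have hdt : SigTerm.depth (.ofFormula φ) ≤ k + 1 := by
      simp only [SigTerm.depth]; omega
    rw [romega_iff M R0 (k+1) _ w hdt]
    have hstep : RSeq M R0 (k+1) (.ofFormula φ) w ↔ Sat (M.withEnt (RSeq M R0 k)) w φ := by
      constructor
      · rintro (h | ⟨ψ, hψ, hd, hs⟩)
        · exact absurd (rseq_depth M R0 hR0 k φ w h) (by omega)
        · injection hψ with h'; subst h'; exact hs
      · intro hs
        exact Or.inr ⟨φ, rfl, hk, hs⟩
    rw [hstep]
    exact sat_congr M φ (RSeq M R0 k) (ROmega M R0)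
      (fun t v hlt => (romega_iff M R0 k t v (by omega)).symm) w
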